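/- arXiv:2306.07134 — 2 statements merged into one kernel-verified Lean document; each statement's English description precedes it below -/
import Mathlib

section
/- If the profit function π(c) = α(c)·(Θ − θ·n·b(c) − E[r^s])·F is such that α is affine (α'' = 0), the yield rule is r̂(c) = Θ − θ·n·b(c), and b satisfies the equilibrium ODE b'(c) = ρ(c)·(1/(ξn) − b(c)) with ρ(c) = α'(c)/α(c) and ξ = θ/(Θ − E[r^s]), then the second derivative of π vanishes identically: π''(c) = 0 for all c. -/
/-!
The equilibrium ODE makes the profit stationary, not merely affine: since `θ n / (ξ n) = Θ - E[r^s]`,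
it gives `θ n α b' = α' (Θ - E[r^s] - θ n b)`, which is exactly the term cancelling `α' (Θ - θ n b - E[r^s])`
in `π' / F`. So `π' ≡ 0`, and a fortiori `π'' ≡ 0`.
-/

theorem hasDerivAt_mul_const_sub_mul_of_ode {α b : ℝ → ℝ} {α' b' K m s c : ℝ}
    (hα : HasDerivAt α α' c) (hb : HasDerivAt b b' c) (hα0 : α c ≠ 0)
    (hode : b' = α' / α c * (s - b c)) :
    HasDerivAt (fun x => α x * (K - m * b x)) (α' * (K - m * s)) c := by
  refine (hα.mul ((hb.const_mul m).const_sub K)).congr_deriv ?_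
  rw [hode]
  field_simp
  ring

theorem stmt_11_general (θ Θ Ers : ℝ) (hθ : 0 < θ) (hΘE : Ers < Θ)
    (n : ℕ) (hn : 1 ≤ n) (F : ℝ)
    (ξ : ℝ) (hξ : ξ = θ / (Θ - Ers))
    (a bnd : ℝ) (α α' b b' : ℝ → ℝ)
    (hαpos : ∀ c ∈ Set.Ioo a bnd, 0 < α c)
    (hαd : ∀ c ∈ Set.Ioo a bnd, HasDerivAt α (α' c) c)
    (hbd : ∀ c ∈ Set.Ioo a bnd, HasDerivAt b (b' c) c)
    (hode : ∀ c ∈ Set.Ioo a bnd,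
      b' c = (α' c / α c) * (1 / (ξ * n) - b c)) :
    ∃ π' : ℝ → ℝ,
      (∀ c ∈ Set.Ioo a bnd,
        HasDerivAt (fun c => α c * (Θ - θ * n * b c - Ers) * F) (π' c) c) ∧
      (∀ c ∈ Set.Ioo a bnd, HasDerivAt π' 0 c) := by
  refine ⟨fun _ => 0, fun c hc => ?_, fun c _ => hasDerivAt_const c 0⟩
  have hn0 : (n : ℝ) ≠ 0 := by positivity
  have hΘE0 : Θ - Ers ≠ 0 := sub_ne_zero.mpr hΘE.ne'
  have hstationary : Θ - Ers - θ * n * (1 / (ξ * n)) = 0 := by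
    rw [hξ]
    field_simp
    ring
  have hπ := (hasDerivAt_mul_const_sub_mul_of_ode (K := Θ - Ers) (m := θ * n)
    (hαd c hc) (hbd c hc) (hαpos c hc).ne' (hode c hc)).mul_const F
  rw [hstationary, mul_zero, zero_mul] at hπ
  have hprofit : (fun x => α x * (Θ - θ * n * b x - Ers) * F) =
      fun x => α x * (Θ - Ers - θ * n * b x) * F := by
    funext x
    ring
  rwa [hprofit]

/-- the second derivative of the profit function vanishes identically. -/
theorem stmt_11 (θ Θ Ers : ℝ) (hθ : 0 < θ) (hΘE : Ers < Θ)
    (n : ℕ) (hn : 1 ≤ n) (F : ℝ) (hF : 0 < F)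
    (ξ : ℝ) (hξ : ξ = θ / (Θ - Ers))
    (a bnd : ℝ) (α α' α'' b b' b'' : ℝ → ℝ)
    (hαpos : ∀ c ∈ Set.Ioo a bnd, 0 < α c)
    (hαd : ∀ c ∈ Set.Ioo a bnd, HasDerivAt α (α' c) c)
    (hα'd : ∀ c ∈ Set.Ioo a bnd, HasDerivAt α' (α'' c) c)
    (hα'' : ∀ c ∈ Set.Ioo a bnd, α'' c = 0)
    (hbd : ∀ c ∈ Set.Ioo a bnd, HasDerivAt b (b' c) c)
    (hb'd : ∀ c ∈ Set.Ioo a bnd, HasDerivAt b' (b'' c) c)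
    (hode : ∀ c ∈ Set.Ioo a bnd,
      b' c = (α' c / α c) * (1 / (ξ * n) - b c)) :
    ∃ π' : ℝ → ℝ,
      (∀ c ∈ Set.Ioo a bnd,
        HasDerivAt (fun c => α c * (Θ - θ * n * b c - Ers) * F) (π' c) c) ∧
      (∀ c ∈ Set.Ioo a bnd, HasDerivAt π' 0 c) :=
  stmt_11_general θ Θ Ers hθ hΘE n hn F ξ hξ a bnd α α' b b' hαpos hαd hbd hode
end

section
/- Any differentiable function b satisfying the first-order condition ρ(c)·(Θ − nθ·b(c)) − nθ·b'(c) − ρ(c)·E[r^s] = 0, where ρ(c) = α'(c)/α(c), has the form b(c) = 1/(ξn) + Γ/α(c) for some constant Γ, where ξ = θ/(Θ − E[r^s]). -/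
/-!
With `k = (Θ - E[r^s]) / (nθ) = 1 / (ξn)`, multiplying the first-order condition by `-α/(nθ)`
turns it into `α' (b - k) + α b' = 0`, i.e. `(α (b - k))' = 0`. So `α (b - k)` is a constant `Γ`
on the interval.
-/

theorem IsOpen.exists_eq_add_div_of_hasDerivAt_mul_sub {𝕜 : Type*} [RCLike 𝕜] {s : Set 𝕜}
    (hs : IsOpen s) (hs' : IsPreconnected s) {α α' b b' : 𝕜 → 𝕜} (k : 𝕜)
    (hα0 : ∀ c ∈ s, α c ≠ 0) (hα : ∀ c ∈ s, HasDerivAt α (α' c) c)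
    (hb : ∀ c ∈ s, HasDerivAt b (b' c) c) (hode : ∀ c ∈ s, α' c * (b c - k) + α c * b' c = 0) :
    ∃ Γ, ∀ c ∈ s, b c = k + Γ / α c := by
  have hg : ∀ c ∈ s, HasDerivAt (fun x => α x * (b x - k)) 0 c := fun c hc => by
    simpa only [hode c hc] using (hα c hc).fun_mul ((hb c hc).sub_const k)
  obtain ⟨Γ, hΓ⟩ := hs.exists_is_const_of_deriv_eq_zero hs'
    (fun c hc => (hg c hc).differentiableAt.differentiableWithinAt) fun c hc => (hg c hc).deriv
  refine ⟨Γ, fun c hc => ?_⟩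
  rw [← hΓ c hc]
  field_simp [hα0 c hc]
  ring

theorem mul_sub_add_mul_eq_zero_of_first_order_condition {m Θ Ers α α' b b' : ℝ}
    (hm : m ≠ 0) (hα : α ≠ 0) (h : α' / α * (Θ - m * b) - m * b' - α' / α * Ers = 0) :
    α' * (b - (Θ - Ers) / m) + α * b' = 0 := by
  have hscale : α' * (b - (Θ - Ers) / m) + α * b' =
      -(α / m) * (α' / α * (Θ - m * b) - m * b' - α' / α * Ers) := by
    field_simp
    ring
  rw [hscale, h, mul_zero]

theorem stmt_12_general (θ Θ Ers : ℝ) (hθ : 0 < θ)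
    (n : ℕ) (hn : 1 ≤ n) (ξ : ℝ) (hξ : ξ = θ / (Θ - Ers))
    (a bnd : ℝ) (α α' b b' : ℝ → ℝ)
    (hαpos : ∀ c ∈ Set.Ioo a bnd, 0 < α c)
    (hαd : ∀ c ∈ Set.Ioo a bnd, HasDerivAt α (α' c) c)
    (hbd : ∀ c ∈ Set.Ioo a bnd, HasDerivAt b (b' c) c)
    (hfoc : ∀ c ∈ Set.Ioo a bnd,
      (α' c / α c) * (Θ - n * θ * b c) - n * θ * b' c - (α' c / α c) * Ers = 0) :
    ∃ Γ : ℝ, ∀ c ∈ Set.Ioo a bnd, b c = 1 / (ξ * n) + Γ / α c := by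
  have hnθ : (n : ℝ) * θ ≠ 0 := mul_ne_zero (Nat.cast_ne_zero.mpr (by omega)) hθ.ne'
  have hk : 1 / (ξ * n) = (Θ - Ers) / (n * θ) := by
    rw [hξ, div_mul_eq_mul_div, one_div_div, mul_comm θ]
  rw [hk]
  exact isOpen_Ioo.exists_eq_add_div_of_hasDerivAt_mul_sub isPreconnected_Ioo _
    (fun c hc => (hαpos c hc).ne') hαd hbd
    fun c hc => mul_sub_add_mul_eq_zero_of_first_order_condition hnθ (hαpos c hc).ne' (hfoc c hc)

/-- any solution of the first-order condition has the form
b(c) = 1/(ξn) + Γ/α(c). -/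
theorem stmt_12 (θ Θ Ers : ℝ) (hθ : 0 < θ) (hΘE : Ers < Θ)
    (n : ℕ) (hn : 1 ≤ n) (ξ : ℝ) (hξ : ξ = θ / (Θ - Ers))
    (a bnd : ℝ) (α α' b b' : ℝ → ℝ)
    (hαpos : ∀ c ∈ Set.Ioo a bnd, 0 < α c)
    (hαd : ∀ c ∈ Set.Ioo a bnd, HasDerivAt α (α' c) c)
    (hbd : ∀ c ∈ Set.Ioo a bnd, HasDerivAt b (b' c) c)
    (hfoc : ∀ c ∈ Set.Ioo a bnd,
      (α' c / α c) * (Θ - n * θ * b c) - n * θ * b' c - (α' c / α c) * Ers = 0) :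
    ∃ Γ : ℝ, ∀ c ∈ Set.Ioo a bnd, b c = 1 / (ξ * n) + Γ / α c :=
  stmt_12_general θ Θ Ers hθ n hn ξ hξ a bnd α α' b b' hαpos hαd hbd hfoc
end
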